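/- arXiv:2311.13523 — 5 statements merged into one kernel-verified Lean document; each statement's English description precedes it below -/
import Mathlib

section
/- Every bipartite graph admits a forest storyplan: there is a bijection τ : V → [n] such that for every step i, the subgraph induced by the vertices visible at step i is a forest. Concretely, if V = A ∪ B is a bipartition, ordering all of A first and then the vertices of B one by one works, since at each step at most one vertex of B is visible. -/
/-- `H` is a minor of `G`: disjoint connected branch sets, one per vertex of `H`,
with an edge of `G` between branch sets of adjacent vertices of `H`. -/
def SimpleGraph.IsMinorOf {W V : Type*} (H : SimpleGraph W) (G : SimpleGraph V) : Prop :=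
  ∃ f : W → Set V,
    (∀ w, (G.induce (f w)).Connected) ∧
    (∀ w₁ w₂, w₁ ≠ w₂ → Disjoint (f w₁) (f w₂)) ∧
    (∀ w₁ w₂, H.Adj w₁ w₂ → ∃ a ∈ f w₁, ∃ b ∈ f w₂, G.Adj a b)

/-- Planarity via Wagner's theorem: no `K₅` minor and no `K₃,₃` minor. -/
def SimpleGraph.IsPlanar {V : Type*} (G : SimpleGraph V) : Prop :=
  ¬ (completeGraph (Fin 5)).IsMinorOf G ∧
  ¬ (completeBipartiteGraph (Fin 3) (Fin 3)).IsMinorOf G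

/-- Outerplanarity: no `K₄` minor and no `K₂,₃` minor. -/
def SimpleGraph.IsOuterplanar {V : Type*} (G : SimpleGraph V) : Prop :=
  ¬ (completeGraph (Fin 4)).IsMinorOf G ∧
  ¬ (completeBipartiteGraph (Fin 2) (Fin 3)).IsMinorOf G

/-- Vertex `v` is visible at step `i`: `τ v ≤ i ≤ max_{u ∈ N[v]} τ u`. -/
def visibleAt {V : Type*} {n : ℕ} (G : SimpleGraph V) (τ : V ≃ Fin n) (v : V) (i : Fin n) :
    Prop :=
  τ v ≤ i ∧ ∃ u, (u = v ∨ G.Adj v u) ∧ i ≤ τ u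

/-- The `i`-th frame: the subgraph induced by the vertices visible at step `i`. -/
def frame {V : Type*} {n : ℕ} (G : SimpleGraph V) (τ : V ≃ Fin n) (i : Fin n) :
    SimpleGraph {v : V // visibleAt G τ v i} :=
  G.induce {v | visibleAt G τ v i}

def IsForestStoryplan {V : Type*} {n : ℕ} (G : SimpleGraph V) (τ : V ≃ Fin n) : Prop :=
  ∀ i : Fin n, (frame G τ i).IsAcyclic

def IsOuterplanarStoryplan {V : Type*} {n : ℕ} (G : SimpleGraph V) (τ : V ≃ Fin n) : Prop :=
  ∀ i : Fin n, (frame G τ i).IsOuterplanar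

def IsPlanarStoryplan {V : Type*} {n : ℕ} (G : SimpleGraph V) (τ : V ≃ Fin n) : Prop :=
  ∀ i : Fin n, (frame G τ i).IsPlanar

/-!
Let `A ∪ B` be a bipartition and list all of `A` before all of `B`. A vertex `b ∈ B` has all its
neighbours in `A`, which come before it, so it is visible only at its own step `τ b`. Hence every
frame contains at most one vertex of `B`, every edge of the frame meets it, and the frame is a
subgraph of a star.
-/

namespace SimpleGraph

theorem isAcyclic_of_forall_adj_mem {W : Type*} {H : SimpleGraph W} {S : Set W}
    (hS : S.Subsingleton) (hadj : ∀ ⦃x y⦄, H.Adj x y → x ∈ S ∨ y ∈ S) : H.IsAcyclic := by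
  rcases S.eq_empty_or_nonempty with rfl | ⟨r, hr⟩
  · have : H = ⊥ := by
      ext x y
      simpa using hadj (x := x) (y := y)
    exact this ▸ isAcyclic_bot
  · refine (isAcyclic_starGraph r).anti fun x y hxy => starGraph_adj.mpr ⟨hxy.ne, ?_⟩
    rcases hadj hxy with hx | hy
    · exact .inl (hS hx hr)
    · exact .inr (hS hy hr)

end SimpleGraph

theorem exists_equiv_fin_lt_of_mem_of_notMem {V : Type*} [Fintype V] (A : Set V)
    [DecidablePred (· ∈ A)] :
    ∃ τ : V ≃ Fin (Fintype.card V), ∀ a b, a ∈ A → b ∉ A → τ a < τ b := by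
  have hcard : Fintype.card A + Fintype.card ↥Aᶜ = Fintype.card V := by
    rw [← Fintype.card_sum]
    exact Fintype.card_congr (Equiv.sumCompl (· ∈ A))
  refine ⟨(Equiv.sumCompl (· ∈ A)).symm.trans
    (((Fintype.equivFin A).sumCongr (Fintype.equivFin ↥Aᶜ)).trans
      (finSumFinEquiv.trans (finCongr hcard))), fun a b ha hb => ?_⟩
  rw [Fin.lt_def]
  simp only [Equiv.trans_apply, Equiv.sumCompl_symm_apply_of_pos ha,
    Equiv.sumCompl_symm_apply_of_neg hb, Equiv.sumCongr_apply, Sum.map_inl, Sum.map_inr,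
    finSumFinEquiv_apply_left, finSumFinEquiv_apply_right, finCongr_apply, Fin.val_cast,
    Fin.val_castAdd, Fin.val_natAdd]
  omega

section Storyplan

variable {V : Type*} {n : ℕ} {G : SimpleGraph V} {τ : V ≃ Fin n} {A : Set V}

theorem visibleAt_iff_eq_of_notMem (hτ : ∀ a b, a ∈ A → b ∉ A → τ a < τ b)
    (hadj : ∀ ⦃u v⦄, G.Adj u v → u ∉ A → v ∈ A) {v : V} (hv : v ∉ A) {i : Fin n} :
    visibleAt G τ v i ↔ τ v = i := by
  refine ⟨fun ⟨hvi, u, hu, hiu⟩ => ?_, fun h => ⟨h.le, v, .inl rfl, h.ge⟩⟩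
  rcases hu with rfl | huv
  · exact le_antisymm hvi hiu
  · exact absurd (hvi.trans hiu) (hτ u v (hadj huv hv) hv).not_ge

theorem isForestStoryplan_of_lt (hτ : ∀ a b, a ∈ A → b ∉ A → τ a < τ b)
    (hbip : ∀ ⦃u v⦄, G.Adj u v → (u ∈ A ↔ v ∉ A)) : IsForestStoryplan G τ := by
  intro i
  have hvis {v} (hv : v ∉ A) : visibleAt G τ v i ↔ τ v = i :=
    visibleAt_iff_eq_of_notMem hτ
      (fun _ _ huv hu => by_contra fun hv => hu ((hbip huv).mpr hv)) hv
  refine SimpleGraph.isAcyclic_of_forall_adj_mem (S := {v | v.1 ∉ A}) ?_ fun x y hxy => ?_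
  · intro x hx y hy
    exact Subtype.ext <| τ.injective <|
      ((hvis hx).mp x.2).trans ((hvis hy).mp y.2).symm
  · by_cases hx : x.1 ∈ A
    · exact .inr ((hbip hxy).mp hx)
    · exact .inl hx

end Storyplan

/-- Every bipartite graph admits a forest storyplan. -/
theorem stmt_4 {V : Type*} [Fintype V] (G : SimpleGraph V) (h : G.Colorable 2) :
    ∃ τ : V ≃ Fin (Fintype.card V), IsForestStoryplan G τ := by
  classical
  obtain ⟨c⟩ := h
  obtain ⟨τ, hτ⟩ := exists_equiv_fin_lt_of_mem_of_notMem {v | c v = 0}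
  refine ⟨τ, isForestStoryplan_of_lt hτ fun u v huv => ?_⟩
  have := c.valid huv
  show c u = 0 ↔ ¬c v = 0
  omega
end

section
/- Let K_{a,b} with parts A and B, 3 ≤ a ≤ b, and let τ : A ∪ B → [a+b] be a vertex order such that every induced visible graph is planar. Then exactly one of A, B has all its vertices simultaneously visible at some step. -/
/-- In any planar storyplan of `K_{a,b}` with `3 ≤ a ≤ b`, exactly one of the two
parts has all its vertices simultaneously visible at some step. -/
theorem stmt_5 (a b : ℕ) (ha : 3 ≤ a) (hab : a ≤ b)
    (τ : (Fin a ⊕ Fin b) ≃ Fin (a + b))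
    (hpl : IsPlanarStoryplan (completeBipartiteGraph (Fin a) (Fin b)) τ) :
    Xor'
      (∃ i : Fin (a + b), ∀ x : Fin a,
        visibleAt (completeBipartiteGraph (Fin a) (Fin b)) τ (Sum.inl x) i)
      (∃ i : Fin (a + b), ∀ y : Fin b,
        visibleAt (completeBipartiteGraph (Fin a) (Fin b)) τ (Sum.inr y) i) := by
  classical
  set G := completeBipartiteGraph (Fin a) (Fin b) with hG
  -- If all of A is visible at i, some B vertex has τ value ≥ i.
  have hAkey : ∀ i : Fin (a + b), (∀ x : Fin a, visibleAt G τ (Sum.inl x) i) →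
      ∃ y : Fin b, i ≤ τ (Sum.inr y) := by
    intro i h
    by_contra hy
    push_neg at hy
    have hx : ∀ x : Fin a, τ (Sum.inl x) = i := by
      intro x
      obtain ⟨hle, u, hu, hiu⟩ := h x
      rcases hu with rfl | hadj
      · exact le_antisymm hle hiu
      · rcases u with u | u
        · simp [hG, completeBipartiteGraph] at hadj
        · exact absurd hiu (not_le.2 (hy u))
    have h01 : (Sum.inl (⟨0, by omega⟩ : Fin a) : Fin a ⊕ Fin b) =
        Sum.inl (⟨1, by omega⟩ : Fin a) := by
      apply τ.injective
      rw [hx, hx]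
    simp at h01
  have hBkey : ∀ i : Fin (a + b), (∀ y : Fin b, visibleAt G τ (Sum.inr y) i) →
      ∃ x : Fin a, i ≤ τ (Sum.inl x) := by
    intro i h
    by_contra hx
    push_neg at hx
    have hy : ∀ y : Fin b, τ (Sum.inr y) = i := by
      intro y
      obtain ⟨hle, u, hu, hiu⟩ := h y
      rcases hu with rfl | hadj
      · exact le_antisymm hle hiu
      · rcases u with u | u
        · exact absurd hiu (not_le.2 (hx u))
        · simp [hG, completeBipartiteGraph] at hadj
    have h01 : (Sum.inr (⟨0, by omega⟩ : Fin b) : Fin a ⊕ Fin b) =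
        Sum.inr (⟨1, by omega⟩ : Fin b) := by
      apply τ.injective
      rw [hy, hy]
    simp at h01
  -- Not both.
  have hnotboth : ¬ ((∃ i : Fin (a + b), ∀ x : Fin a, visibleAt G τ (Sum.inl x) i) ∧
      (∃ i : Fin (a + b), ∀ y : Fin b, visibleAt G τ (Sum.inr y) i)) := by
    rintro ⟨⟨i, hA⟩, ⟨j, hB⟩⟩
    obtain ⟨y₀, hy₀⟩ := hAkey i hA
    obtain ⟨x₀, hx₀⟩ := hBkey j hB
    have h1 : τ (Sum.inr y₀) ≤ j := (hB y₀).1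
    have h2 : τ (Sum.inl x₀) ≤ i := (hA x₀).1
    have he : τ (Sum.inr y₀) = τ (Sum.inl x₀) :=
      le_antisymm (le_trans h1 hx₀) (le_trans h2 hy₀)
    have := τ.injective he
    simp at this
  -- At least one: look at the last step.
  have hn : a + b - 1 < a + b := by omega
  set t : Fin (a + b) := ⟨a + b - 1, hn⟩ with ht
  have htop : ∀ k : Fin (a + b), k ≤ t := by
    intro k
    have := k.isLt
    exact Fin.mk_le_mk.mpr (by omega) |>.trans_eq rfl
  have hatleast : (∃ i : Fin (a + b), ∀ x : Fin a, visibleAt G τ (Sum.inl x) i) ∨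
      (∃ i : Fin (a + b), ∀ y : Fin b, visibleAt G τ (Sum.inr y) i) := by
    rcases hw : τ.symm t with x₀ | y₀
    · -- last vertex is in A: all of B visible at t
      right
      refine ⟨t, fun y => ⟨htop _, Sum.inl x₀, Or.inr ?_, ?_⟩⟩
      · simp [hG, completeBipartiteGraph]
      · have : τ (Sum.inl x₀) = t := by rw [← hw, τ.apply_symm_apply]
        rw [this]
    · -- last vertex is in B: all of A visible at t
      left
      refine ⟨t, fun x => ⟨htop _, Sum.inr y₀, Or.inr ?_, ?_⟩⟩
      · simp [hG, completeBipartiteGraph]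
      · have : τ (Sum.inr y₀) = t := by rw [← hw, τ.apply_symm_apply]
        rw [this]
  rcases hatleast with hP | hQ
  · exact Or.inl ⟨hP, fun hQ => hnotboth ⟨hP, hQ⟩⟩
  · exact Or.inr ⟨hQ, fun hP => hnotboth ⟨hP, hQ⟩⟩
end

section
/- The complete 5-partite graph C_{3,3,3,3,3} (five independent sets V_1,...,V_5 of size 3, with edges between V_i and V_{(i mod 5)+1} for each i, forming five copies of K_{3,3} arranged in a cycle) admits no planar storyplan: for every bijection τ of its vertices, some step's visible induced subgraph is nonplanar. -/
/-- The cyclic complete 5-partite graph `C_{3,3,3,3,3}`: parts `{i} × Fin 3` for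
`i : ZMod 5`, with cyclically consecutive parts completely joined. -/
def C33333 : SimpleGraph (ZMod 5 × Fin 3) :=
  SimpleGraph.fromRel (fun a b => b.1 = a.1 + 1)


namespace Stmt6

lemma adj_up (j : ZMod 5) (a b : Fin 3) : C33333.Adj (j,a) ((j+1),b) := by
  refine ⟨?_, Or.inl rfl⟩
  intro h
  have h2 : j = j + 1 := congrArg Prod.fst h
  exact (by decide : (1:ZMod 5) ≠ 0) (by linear_combination -h2)

lemma adj_down (j : ZMod 5) (a b : Fin 3) : C33333.Adj (j,a) ((j-1),b) := by
  refine ⟨?_, Or.inr (by ring)⟩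
  intro h
  have h2 : j = j - 1 := congrArg Prod.fst h
  exact (by decide : (1:ZMod 5) ≠ 0) (by linear_combination h2)

lemma singleton_connected {V : Type*} (G : SimpleGraph V) (x : V) :
    (G.induce {x}).Connected := by
  have : Nonempty ↥({x} : Set V) := ⟨⟨x, rfl⟩⟩
  constructor
  intro u v
  have : u = v := Subtype.ext (u.2.trans v.2.symm)
  rw [this]

variable (τ : (ZMod 5 × Fin 3) ≃ Fin 15)

/-- The step at which part `j` is completed. -/
def M (j : ZMod 5) : Fin 15 := max (τ (j,0)) (max (τ (j,1)) (τ (j,2)))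

lemma le_M (j : ZMod 5) (a : Fin 3) : τ (j,a) ≤ M τ j := by
  fin_cases a
  · exact le_max_left _ _
  · exact le_trans (le_max_left _ _) (le_max_right _ _)
  · exact le_trans (le_max_right _ _) (le_max_right _ _)

lemma exists_ge (j : ZMod 5) {i : Fin 15} (h : i ≤ M τ j) : ∃ b, i ≤ τ (j,b) := by
  simp only [M, le_max_iff] at h
  rcases h with h | h | h
  exacts [⟨0,h⟩, ⟨1,h⟩, ⟨2,h⟩]

lemma part_vis (j : ZMod 5) (a : Fin 3) (i : Fin 15)
    (h1 : M τ j ≤ i) (h2 : i ≤ max (M τ (j-1)) (M τ (j+1))) :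
    visibleAt C33333 τ (j,a) i := by
  refine ⟨(le_M τ j a).trans h1, ?_⟩
  rcases le_max_iff.mp h2 with h | h
  · obtain ⟨b, hb⟩ := exists_ge τ _ h
    exact ⟨(j-1,b), Or.inr (adj_down j a b), hb⟩
  · obtain ⟨b, hb⟩ := exists_ge τ _ h
    exact ⟨(j+1,b), Or.inr (adj_up j a b), hb⟩

lemma asc (j j' j'' : ZMod 5) (e1 : j' = j + 1) (e2 : j'' = j + 2)
    (hab : M τ j ≤ M τ j') (hbc : M τ j' ≤ M τ j'') :
    ∃ (k : ZMod 5) (i : Fin 15), M τ k ≤ i ∧ M τ (k+1) ≤ i ∧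
      i ≤ max (M τ (k-1)) (M τ (k+1)) ∧ i ≤ max (M τ k) (M τ (k+2)) := by
  subst e1; subst e2
  exact ⟨j, M τ (j+1), hab, le_refl _, le_max_right _ _,
    le_trans hbc (le_max_right _ _)⟩

lemma desc (j j' j'' : ZMod 5) (e1 : j' = j + 1) (e2 : j'' = j + 2)
    (hab : M τ j' ≤ M τ j) (hbc : M τ j'' ≤ M τ j') :
    ∃ (k : ZMod 5) (i : Fin 15), M τ k ≤ i ∧ M τ (k+1) ≤ i ∧
      i ≤ max (M τ (k-1)) (M τ (k+1)) ∧ i ≤ max (M τ k) (M τ (k+2)) := by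
  subst e1; subst e2
  refine ⟨j+1, M τ (j+1), le_refl _, ?_, ?_, le_max_left _ _⟩
  · rw [show j+1+1 = j+2 from by ring]; exact hbc
  · rw [show j+1-1 = j from by ring, show j+1+1 = j+2 from by ring]
    exact le_trans hab (le_max_left _ _)

/-- There is a step `i` at which two cyclically consecutive parts `k`, `k+1`
are simultaneously fully visible. -/
lemma key : ∃ (k : ZMod 5) (i : Fin 15), M τ k ≤ i ∧ M τ (k+1) ≤ i ∧
    i ≤ max (M τ (k-1)) (M τ (k+1)) ∧ i ≤ max (M τ k) (M τ (k+2)) := by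
  rcases le_total (M τ 0) (M τ 1) with h1 | h1 <;>
  rcases le_total (M τ 1) (M τ 2) with h2 | h2 <;>
  rcases le_total (M τ 2) (M τ 3) with h3 | h3 <;>
  rcases le_total (M τ 3) (M τ 4) with h4 | h4 <;>
  rcases le_total (M τ 4) (M τ 0) with h5 | h5 <;>
  first
    | exact asc τ 0 1 2 (by decide) (by decide) h1 h2
    | exact asc τ 1 2 3 (by decide) (by decide) h2 h3
    | exact asc τ 2 3 4 (by decide) (by decide) h3 h4
    | exact asc τ 3 4 0 (by decide) (by decide) h4 h5
    | exact asc τ 4 0 1 (by decide) (by decide) h5 h1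
    | exact desc τ 0 1 2 (by decide) (by decide) h1 h2
    | exact desc τ 1 2 3 (by decide) (by decide) h2 h3
    | exact desc τ 2 3 4 (by decide) (by decide) h3 h4
    | exact desc τ 3 4 0 (by decide) (by decide) h4 h5
    | exact desc τ 4 0 1 (by decide) (by decide) h5 h1

end Stmt6

/-- `C_{3,3,3,3,3}` admits no planar storyplan. -/
theorem stmt_6 (τ : (ZMod 5 × Fin 3) ≃ Fin 15) :
    ∃ i : Fin 15, ¬ (frame C33333 τ i).IsPlanar := by
  obtain ⟨k, i, h1, h2, h3, h4⟩ := Stmt6.key τ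
  refine ⟨i, fun hp => hp.2 ?_⟩
  have visA : ∀ a : Fin 3, visibleAt C33333 τ (k, a) i :=
    fun a => Stmt6.part_vis τ k a i h1 h3
  have visB : ∀ a : Fin 3, visibleAt C33333 τ (k+1, a) i := by
    intro a
    apply Stmt6.part_vis τ (k+1) a i h2
    rw [show k+1-1 = k from by ring, show k+1+1 = k+2 from by ring]
    exact h4
  set g : Fin 3 ⊕ Fin 3 → {v // visibleAt C33333 τ v i} :=
    Sum.elim (fun a => ⟨(k,a), visA a⟩) (fun b => ⟨(k+1,b), visB b⟩) with hg
  have ginj : Function.Injective g := by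
    rintro (a|a) (b|b) h <;>
      simp only [hg, Sum.elim_inl, Sum.elim_inr, Subtype.mk.injEq, Prod.mk.injEq] at h
    · exact congrArg Sum.inl h.2
    · exact absurd h.1 (fun e => (by decide : (1:ZMod 5) ≠ 0) (by linear_combination -e))
    · exact absurd h.1 (fun e => (by decide : (1:ZMod 5) ≠ 0) (by linear_combination e))
    · exact congrArg Sum.inr h.2
  refine ⟨fun w => {g w}, fun w => Stmt6.singleton_connected _ _,
    fun w₁ w₂ hne => Set.disjoint_singleton.mpr (fun e => hne (ginj e)), ?_⟩
  rintro (a|a) (b|b) hadj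
  · simp at hadj
  · exact ⟨g (.inl a), rfl, g (.inr b), rfl, Stmt6.adj_up k a b⟩
  · exact ⟨g (.inr a), rfl, g (.inl b), rfl, (Stmt6.adj_up k b a).symm⟩
  · simp at hadj
end

section
/- The cyclic complete 5-partite graph C_{2,2,2,2,2} (five independent sets of size 2, consecutive parts cyclically completely joined) admits no forest storyplan: for every vertex order τ, at some step the visible induced subgraph contains a cycle. -/
/-- The cyclic complete 5-partite graph `C_{2,2,2,2,2}`: parts `{i} × Fin 2` for
`i : ZMod 5`, with cyclically consecutive parts completely joined. -/
def C22222 : SimpleGraph (ZMod 5 × Fin 2) :=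
  SimpleGraph.fromRel (fun a b => b.1 = a.1 + 1)

private lemma not_acyclic_of_c4' {V : Type*} (G : SimpleGraph V) (a b c d : V)
    (hab : a ≠ b) (hcd : c ≠ d)
    (h1 : G.Adj a c) (h2 : G.Adj c b) (h3 : G.Adj b d) (h4 : G.Adj d a) :
    ¬ G.IsAcyclic := by
  intro hacyc
  refine hacyc (SimpleGraph.Walk.cons h1 (SimpleGraph.Walk.cons h2
    (SimpleGraph.Walk.cons h3 (SimpleGraph.Walk.cons h4 SimpleGraph.Walk.nil)))) ?_
  have hac := h1.ne
  have hcb := h2.ne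
  have hbd := h3.ne
  have hda := h4.ne
  rw [SimpleGraph.Walk.isCycle_def]
  refine ⟨?_, by simp, ?_⟩
  · rw [SimpleGraph.Walk.isTrail_def]
    simp [List.nodup_cons, Sym2.eq_iff]
    tauto
  · simp [List.nodup_cons]
    tauto

private lemma c_adj' (m : ZMod 5) (k k' : Fin 2) : C22222.Adj (m, k) (m + 1, k') := by
  rw [C22222, SimpleGraph.fromRel_adj]
  refine ⟨?_, Or.inl rfl⟩
  intro h
  have h1 : m = m + 1 := congrArg Prod.fst h
  exact absurd (left_eq_add.mp h1) (by decide)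

/-- `C_{2,2,2,2,2}` admits no forest storyplan: for every vertex order, at some
step the visible induced subgraph contains a cycle. -/
theorem stmt_7 (τ : (ZMod 5 × Fin 2) ≃ Fin 10) :
    ∃ i : Fin 10, ¬ (frame C22222 τ i).IsAcyclic := by
  classical
  set t : ZMod 5 → Fin 10 := fun p => max (τ (p, 0)) (τ (p, 1)) with ht
  set B : ZMod 5 → Prop := fun p => t (p - 1) < t p ∧ t (p + 1) < t p with hB
  -- no two cyclically consecutive parts can both be "bad"
  have asym : ∀ p : ZMod 5, B p → ¬ B (p + 1) := by
    intro p hp hq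
    have h1 : t (p + 1) < t p := hp.2
    have h2 : t p < t (p + 1) := by
      have := hq.1
      rwa [add_sub_cancel_right] at this
    exact absurd h1 (not_lt.mpr h2.le)
  -- since the 5-cycle of parts is odd, two consecutive parts are both "good"
  obtain ⟨j, hgj, hgj1⟩ : ∃ j : ZMod 5, ¬ B j ∧ ¬ B (j + 1) := by
    by_contra hcon
    push_neg at hcon
    by_cases h0 : B 0
    · have h1 := asym 0 h0
      have h2 : B 2 := by have := hcon 1; simpa [show (1:ZMod 5)+1 = 2 by decide] using this h1
      have h3 := asym 2 h2
      rw [show (2:ZMod 5)+1 = 3 by decide] at h3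
      have h4 : B 4 := by
        have := hcon 3
        simpa [show (3:ZMod 5)+1 = 4 by decide] using this h3
      have := asym 4 h4
      rw [show (4:ZMod 5)+1 = 0 by decide] at this
      exact this h0
    · have h1 : B 1 := by simpa [show (0:ZMod 5)+1 = 1 by decide] using (hcon 0) h0
      have h2 := asym 1 h1
      rw [show (1:ZMod 5)+1 = 2 by decide] at h2
      have h3 : B 3 := by simpa [show (2:ZMod 5)+1 = 3 by decide] using (hcon 2) h2
      have h4 := asym 3 h3
      rw [show (3:ZMod 5)+1 = 4 by decide] at h4
      have h5 : B 0 := by simpa [show (4:ZMod 5)+1 = 0 by decide] using (hcon 4) h4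
      exact h0 h5
  -- the common step at which all of parts j, j+1 are visible
  set i : Fin 10 := max (t j) (t (j + 1)) with hi
  have argmax : ∀ p : ZMod 5, ∃ k : Fin 2, t p = τ (p, k) := by
    intro p
    rcases max_cases (τ (p, 0)) (τ (p, 1)) with ⟨h, _⟩ | ⟨h, _⟩
    · exact ⟨0, h⟩
    · exact ⟨1, h⟩
  have vis : ∀ (m : ZMod 5) (k : Fin 2), τ (m, k) ≤ i →
      (i ≤ t (m - 1) ∨ i ≤ t (m + 1)) → visibleAt C22222 τ (m, k) i := by
    intro m k h1 h2
    refine ⟨h1, ?_⟩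
    rcases h2 with h | h
    · obtain ⟨k', hk'⟩ := argmax (m - 1)
      refine ⟨(m - 1, k'), Or.inr ?_, hk' ▸ h⟩
      have := c_adj' (m - 1) k' k
      rw [sub_add_cancel] at this
      exact this.symm
    · obtain ⟨k', hk'⟩ := argmax (m + 1)
      exact ⟨(m + 1, k'), Or.inr (c_adj' m k k'), hk' ▸ h⟩
  have tle : ∀ (m : ZMod 5) (k : Fin 2), τ (m, k) ≤ t m := by
    intro m k
    fin_cases k
    · exact le_max_left _ _
    · exact le_max_right _ _
  have hGj : t j ≤ t (j - 1) ∨ t j ≤ t (j + 1) := by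
    rcases not_and_or.mp hgj with h | h
    · exact Or.inl (not_lt.mp h)
    · exact Or.inr (not_lt.mp h)
  have hGj1 : t (j + 1) ≤ t j ∨ t (j + 1) ≤ t (j + 1 + 1) := by
    rcases not_and_or.mp hgj1 with h | h
    · rw [add_sub_cancel_right] at h
      exact Or.inl (not_lt.mp h)
    · exact Or.inr (not_lt.mp h)
  have visj : ∀ k : Fin 2, visibleAt C22222 τ (j, k) i := by
    intro k
    refine vis j k (le_trans (tle j k) (le_max_left _ _)) ?_
    rcases le_total (t j) (t (j + 1)) with h | h
    · exact Or.inr (max_le h le_rfl)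
    · rcases hGj with h' | h'
      · exact Or.inl (max_le h' (le_trans h h'))
      · exact Or.inr (max_le h' (le_trans h h'))
  have visj1 : ∀ k : Fin 2, visibleAt C22222 τ (j + 1, k) i := by
    intro k
    refine vis (j + 1) k (le_trans (tle (j + 1) k) (le_max_right _ _)) ?_
    rw [add_sub_cancel_right]
    rcases le_total (t (j + 1)) (t j) with h | h
    · exact Or.inl (max_le le_rfl h)
    · rcases hGj1 with h' | h'
      · exact Or.inl (max_le le_rfl h')
      · exact Or.inr (max_le (le_trans h h') h')
  -- the four visible vertices of parts j, j+1 induce a 4-cycle in the frame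
  refine ⟨i, ?_⟩
  set a : {v // visibleAt C22222 τ v i} := ⟨(j, 0), visj 0⟩ with ha
  set b : {v // visibleAt C22222 τ v i} := ⟨(j, 1), visj 1⟩ with hb'
  set c : {v // visibleAt C22222 τ v i} := ⟨(j + 1, 0), visj1 0⟩ with hc'
  set d : {v // visibleAt C22222 τ v i} := ⟨(j + 1, 1), visj1 1⟩ with hd'
  have hac : (frame C22222 τ i).Adj a c := c_adj' j 0 0
  have hcb : (frame C22222 τ i).Adj c b := (c_adj' j 1 0).symm
  have hbd : (frame C22222 τ i).Adj b d := c_adj' j 1 1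
  have hda : (frame C22222 τ i).Adj d a := (c_adj' j 0 1).symm
  have hab : a ≠ b := by simp [ha, hb', Subtype.ext_iff]
  have hcd : c ≠ d := by simp [hc', hd', Subtype.ext_iff]
  exact not_acyclic_of_c4' _ a b c d hab hcd hac hcb hbd hda
end

section
/- The octahedron graph K_{2,2,2} admits no outerplanar storyplan: for every vertex ordering τ, at some step the visible induced subgraph is not outerplanar. In particular, for the first vertex v that disappears, the entire closed neighborhood N[v], inducing a wheel W_4, is visible at some step. -/
/-- The wheel graph `W_k`: a cycle on `k` vertices (`some i`) plus a hub (`none`)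
adjacent to all of them. -/
def wheelGraph (k : ℕ) : SimpleGraph (Option (ZMod k)) :=
  SimpleGraph.fromRel (fun a b =>
    a = none ∨ ∃ i : ZMod k, a = some i ∧ b = some (i + 1))
/-- The octahedron graph `K_{2,2,2}`. -/
def octahedron : SimpleGraph (Σ _ : Fin 3, Fin 2) :=
  SimpleGraph.completeMultipartiteGraph (fun _ : Fin 3 => Fin 2)

namespace SimpleGraph

variable {U V W : Type*} {G : SimpleGraph V} {G' : SimpleGraph W}

theorem isMinorOf_refl (G : SimpleGraph V) : G.IsMinorOf G :=
  ⟨fun v => {v}, fun _ => Connected.of_subsingleton,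
    fun _ _ h => Set.disjoint_singleton.mpr h, fun v w h => ⟨v, rfl, w, rfl, h⟩⟩

theorem IsMinorOf.map {H : SimpleGraph U} (h : H.IsMinorOf G') (φ : G' →g G)
    (hφ : Function.Injective φ) : H.IsMinorOf G := by
  obtain ⟨f, hconn, hdisj, hadj⟩ := h
  refine ⟨fun u => φ '' f u, fun u => ?_, fun u₁ u₂ hne => ?_, fun u₁ u₂ huu => ?_⟩
  · let ψ : G'.induce (f u) →g G.induce (φ '' f u) :=
      ⟨fun x => ⟨φ x, Set.mem_image_of_mem φ x.2⟩, fun hxy => φ.map_adj hxy⟩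
    refine (hconn u).map ψ ?_
    rintro ⟨_, x, hx, rfl⟩
    exact ⟨⟨x, hx⟩, rfl⟩
  · exact (Set.disjoint_image_iff hφ).mpr (hdisj u₁ u₂ hne)
  · obtain ⟨a, ha, b, hb, hab⟩ := hadj u₁ u₂ huu
    exact ⟨φ a, Set.mem_image_of_mem φ ha, φ b, Set.mem_image_of_mem φ hb, φ.map_adj hab⟩

theorem IsOuterplanar.of_injective_hom (h : G.IsOuterplanar) (φ : G' →g G)
    (hφ : Function.Injective φ) : G'.IsOuterplanar :=
  ⟨fun hK => h.1 (hK.map φ hφ), fun hK => h.2 (hK.map φ hφ)⟩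

end SimpleGraph

open SimpleGraph

section Storyplan

variable {V : Type*} {n : ℕ} (G : SimpleGraph V) (τ : V ≃ Fin n)

theorem exists_forall_visibleAt_of_disappearsFirst (v : V)
    (hfirst : ∀ u w, (w = v ∨ G.Adj v w) → ∃ w', (w' = u ∨ G.Adj u w') ∧ τ w ≤ τ w') :
    ∃ i : Fin n, ∀ u, (u = v ∨ G.Adj v u) → visibleAt G τ u i := by
  have : Finite V := .of_equiv _ τ.symm
  have : Nonempty {w // w = v ∨ G.Adj v w} := ⟨⟨v, .inl rfl⟩⟩
  obtain ⟨⟨w, hw⟩, hmax⟩ := Finite.exists_max fun w : {w // w = v ∨ G.Adj v w} => τ w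
  exact ⟨τ w, fun u hu => ⟨hmax ⟨u, hu⟩, hfirst u w hw⟩⟩

theorem exists_disappearsFirst [Nonempty V] :
    ∃ v, ∀ u w, (w = v ∨ G.Adj v w) → ∃ w', (w' = u ∨ G.Adj u w') ∧ τ w ≤ τ w' := by
  classical
  have : Fintype V := .ofEquiv _ τ.symm
  let closedNbhd (v : V) : Finset V := {u | u = v ∨ G.Adj v u}
  have hmem (v : V) : v ∈ closedNbhd v := by simp [closedNbhd]
  let lastStep (v : V) : Fin n := (closedNbhd v).sup' ⟨v, hmem v⟩ τ
  obtain ⟨v, hv⟩ := Finite.exists_min lastStep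
  refine ⟨v, fun u w hw => ?_⟩
  obtain ⟨w', hw', hlast⟩ := (closedNbhd u).exists_mem_eq_sup' ⟨u, hmem u⟩ τ
  refine ⟨w', by simpa [closedNbhd] using hw', ?_⟩
  calc τ w ≤ lastStep v := Finset.le_sup' τ (by simpa [closedNbhd] using hw)
    _ ≤ lastStep u := hv u
    _ = τ w' := hlast

theorem exists_frame_not_isOuterplanar [Nonempty V]
    (hnbhd : ∀ v, ¬ (G.induce {u | u = v ∨ G.Adj v u}).IsOuterplanar) :
    ∃ i : Fin n, ¬ (frame G τ i).IsOuterplanar := by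
  obtain ⟨v, hv⟩ := exists_disappearsFirst G τ
  obtain ⟨i, hi⟩ := exists_forall_visibleAt_of_disappearsFirst G τ v hv
  exact ⟨i, fun h => hnbhd v (h.of_injective_hom (induceHomOfLE G hi).toHom
    (induceHomOfLE G hi).injective)⟩

end Storyplan

instance {V W : Type*} : DecidableRel (completeBipartiteGraph V W).Adj := fun _ _ =>
  inferInstanceAs (Decidable (_ ∧ _ ∨ _ ∧ _))

instance {k : ℕ} [NeZero k] : DecidableRel (wheelGraph k).Adj := fun _ _ =>
  inferInstanceAs (Decidable (_ ≠ _ ∧ (_ ∨ _)))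

instance : DecidableRel octahedron.Adj :=
  inferInstanceAs (DecidableRel (completeMultipartiteGraph _).Adj)

theorem exists_completeBipartite_subgraph_wheelGraph_four :
    ∃ f : Fin 2 ⊕ Fin 3 → Option (ZMod 4), Function.Injective f ∧
      ∀ a b, (completeBipartiteGraph (Fin 2) (Fin 3)).Adj a b → (wheelGraph 4).Adj (f a) (f b) :=
  ⟨Sum.elim ![some 0, some 2] ![none, some 1, some 3], by decide, by decide⟩

theorem wheelGraph_four_not_isOuterplanar : ¬ (wheelGraph 4).IsOuterplanar := fun h => by
  obtain ⟨f, hf, hadj⟩ := exists_completeBipartite_subgraph_wheelGraph_four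
  exact h.2 ((isMinorOf_refl _).map ⟨f, hadj _ _⟩ hf)

def wheelToOctahedronFun (v : Σ _ : Fin 3, Fin 2) : Option (ZMod 4) → Σ _ : Fin 3, Fin 2 :=
  Option.elim' v ![⟨v.1 + 1, 0⟩, ⟨v.1 + 2, 0⟩, ⟨v.1 + 1, 1⟩, ⟨v.1 + 2, 1⟩]

theorem wheelToOctahedronFun_injective :
    ∀ v, Function.Injective (wheelToOctahedronFun v) := by decide

theorem octahedron_adj_wheelToOctahedronFun_iff : ∀ v a b,
    octahedron.Adj (wheelToOctahedronFun v a) (wheelToOctahedronFun v b) ↔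
      (wheelGraph 4).Adj a b := by decide

theorem range_wheelToOctahedronFun : ∀ v u,
    u ∈ Set.range (wheelToOctahedronFun v) ↔ u = v ∨ octahedron.Adj v u := by decide

def wheelToOctahedron (v : Σ _ : Fin 3, Fin 2) : wheelGraph 4 ↪g octahedron where
  toFun := wheelToOctahedronFun v
  inj' := wheelToOctahedronFun_injective v
  map_rel_iff' := octahedron_adj_wheelToOctahedronFun_iff v _ _

theorem octahedron_induce_closedNbhd_iso_wheelGraph (v : Σ _ : Fin 3, Fin 2) :
    Nonempty ((octahedron.induce {u | u = v ∨ octahedron.Adj v u}) ≃g wheelGraph 4) := by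
  have hrange : {u | u = v ∨ octahedron.Adj v u} = Set.range (wheelToOctahedron v) :=
    Set.ext fun u => (range_wheelToOctahedronFun v u).symm
  rw [hrange]
  exact ⟨(wheelToOctahedron v).isoInduceRange.symm⟩

/-- The octahedron admits no outerplanar storyplan: for every vertex order some
frame is not outerplanar; in particular, for any vertex `v` that disappears
first, the whole closed neighborhood `N[v]`, which induces a wheel `W₄`, is
visible at some step. -/
theorem stmt_19 (τ : (Σ _ : Fin 3, Fin 2) ≃ Fin 6) :
    (∃ i : Fin 6, ¬ (frame octahedron τ i).IsOuterplanar) ∧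
    ∀ v : (Σ _ : Fin 3, Fin 2),
      -- `v` disappears no later than any other vertex:
      (∀ u w, (w = v ∨ octahedron.Adj v w) →
        ∃ w', (w' = u ∨ octahedron.Adj u w') ∧ τ w ≤ τ w') →
      (∃ i : Fin 6, ∀ u, (u = v ∨ octahedron.Adj v u) →
        visibleAt octahedron τ u i) ∧
      Nonempty
        ((octahedron.induce {u | u = v ∨ octahedron.Adj v u}) ≃g wheelGraph 4) := by
  refine ⟨exists_frame_not_isOuterplanar octahedron τ fun v h => ?_, fun v hfirst =>
    ⟨exists_forall_visibleAt_of_disappearsFirst octahedron τ v hfirst,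
      octahedron_induce_closedNbhd_iso_wheelGraph v⟩⟩
  obtain ⟨e⟩ := octahedron_induce_closedNbhd_iso_wheelGraph v
  exact wheelGraph_four_not_isOuterplanar (h.of_injective_hom e.symm.toHom e.symm.injective)
end
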